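/- Let φ : W → ℂ be holomorphic on the annulus W = {r₁ < |z| < r₂} and let μ(z) = (i/2) z² h'(|z|)/(|z| r₀), where h : (r₁, r₂) → ℝ is smooth, equal to 0 near r₁ and equal to 1 near r₂. Then the integral ∫_W μ(z) φ(z) dA (with dA the Lebesgue area measure times 2, i.e. dA = i dz ∧ dz̄) is independent of the choice of such h. -/

import Mathlib

open Complex Set MeasureTheory

/-- `h` is admissible: smooth, identically `0` near `r₁` and identically `1` near `r₂`. -/
def Admissible (r₁ r₂ : ℝ) (h : ℝ → ℝ) : Prop :=
  ContDiff ℝ (⊤ : ℕ∞) h ∧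
  (∃ ε > 0, ∀ r : ℝ, r < r₁ + ε → h r = 0) ∧
  (∃ ε > 0, ∀ r : ℝ, r₂ - ε < r → h r = 1)

lemma deriv_zero_of_lt {h : ℝ → ℝ} {c r : ℝ} (hr : r < c) (h0 : ∀ x < c, h x = 0) :
    deriv h r = 0 := by
  have he : h =ᶠ[nhds r] fun _ => (0 : ℝ) :=
    Filter.eventually_of_mem (Iio_mem_nhds hr) h0
  rw [he.deriv_eq, deriv_const]

lemma deriv_zero_of_gt {h : ℝ → ℝ} {c r : ℝ} (hr : c < r) (h0 : ∀ x, c < x → h x = 1) :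
    deriv h r = 0 := by
  have he : h =ᶠ[nhds r] fun _ => (1 : ℝ) :=
    Filter.eventually_of_mem (Ioi_mem_nhds hr) h0
  rw [he.deriv_eq, deriv_const]

lemma pairing_eq (r₀ r₁ r₂ : ℝ) (hr₁ : 0 < r₁) (hr₁₀ : r₁ < r₀) (hr₀₂ : r₀ < r₂)
    (W : Set ℂ) (hW : W = {z : ℂ | r₁ < ‖z‖ ∧ ‖z‖ < r₂})
    (φ : ℂ → ℂ) (hφ : DifferentiableOn ℂ φ W)
    (h : ℝ → ℝ) (hh : Admissible r₁ r₂ h) :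
    (∫ z in W, (Complex.I / 2) * z ^ 2 * (deriv h (‖z‖)) /
        ((‖z‖ : ℂ) * r₀) * φ z ∂volume)
      = (∮ z in C(0, r₀), z * φ z) / (2 * r₀) := by
  obtain ⟨hsm, ⟨ε₁, hε₁, hL⟩, ⟨ε₂, hε₂, hR⟩⟩ := hh
  have pi_pos := Real.pi_pos
  have hr₀ : (0 : ℝ) < r₀ := hr₁.trans hr₁₀
  have hr₀C : (r₀ : ℂ) ≠ 0 := by exact_mod_cast hr₀.ne'
  have hW_open : IsOpen W := by
    rw [hW]
    exact isOpen_Ioo.preimage continuous_norm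
  have hWmeas : MeasurableSet W := hW_open.measurableSet
  set g : ℂ → ℂ := fun z => (Complex.I / 2) * z ^ 2 * (deriv h (‖z‖)) /
      ((‖z‖ : ℂ) * r₀) * φ z with hg
  set C : ℂ := ∮ z in C(0, r₀), z * φ z with hC
  have hder : ∀ z ∈ W, DifferentiableAt ℂ (fun z => z * φ z) z := by
    intro z hz
    exact differentiableAt_id.mul ((hφ z hz).differentiableAt (hW_open.mem_nhds hz))
  have hcont : ContinuousOn (fun z => z * φ z) W :=
    continuousOn_id.mul hφ.continuousOn
  -- circle integral constancy
  have hcirc : ∀ r ∈ Ioo r₁ r₂, (∮ z in C(0, r), z * φ z) = C := by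
    intro r hr
    have hsub : ∀ a b : ℝ, r₁ < a → b < r₂ →
        Metric.closedBall (0:ℂ) b \ Metric.ball (0:ℂ) a ⊆ W := by
      intro a b ha hb z hz
      rw [hW]
      simp only [mem_diff, Metric.mem_closedBall, Metric.mem_ball, Complex.dist_eq,
        sub_zero, not_lt] at hz
      exact ⟨lt_of_lt_of_le ha hz.2, lt_of_le_of_lt hz.1 hb⟩
    rcases le_total r r₀ with hle | hle
    · exact (circleIntegral_eq_of_differentiable_on_annulus_off_countable
        (c := (0:ℂ)) (f := fun z => z * φ z) (s := (∅ : Set ℂ))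
        (lt_of_lt_of_le hr₁ hr.1.le) hle Set.countable_empty
        (hcont.mono (hsub r r₀ hr.1 hr₀₂))
        (fun z hz => hder z (hsub r r₀ hr.1 hr₀₂
          ⟨Metric.ball_subset_closedBall hz.1.1,
           fun hzz => hz.1.2 (Metric.ball_subset_closedBall hzz)⟩))).symm
    · exact circleIntegral_eq_of_differentiable_on_annulus_off_countable
        (c := (0:ℂ)) (f := fun z => z * φ z) (s := (∅ : Set ℂ))
        hr₀ hle Set.countable_empty
        (hcont.mono (hsub r₀ r hr₁₀ hr.2))
        (fun z hz => hder z (hsub r₀ r hr₁₀ hr.2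
          ⟨Metric.ball_subset_closedBall hz.1.1,
           fun hzz => hz.1.2 (Metric.ball_subset_closedBall hzz)⟩))
  -- the angular integral
  have key_inner : ∀ r ∈ Ioo r₁ r₂,
      (∫ θ in Ioo (-Real.pi) Real.pi,
        Complex.exp (θ * Complex.I) ^ 2 * φ (r * Complex.exp (θ * Complex.I)))
        = C / (Complex.I * r ^ 2) := by
    intro r hr
    have hrpos : (0:ℝ) < r := hr₁.trans hr.1
    set q : ℝ → ℂ := fun θ => Complex.exp (θ * Complex.I) ^ 2 *
      φ (r * Complex.exp (θ * Complex.I)) with hq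
    have hper : Function.Periodic q (2 * Real.pi) := by
      intro θ
      have he : Complex.exp (((θ + 2 * Real.pi : ℝ) : ℂ) * Complex.I)
          = Complex.exp ((θ : ℂ) * Complex.I) := by
        push_cast
        rw [add_mul, Complex.exp_add, Complex.exp_two_pi_mul_I, mul_one]
      simp only [q, he]
    have e3 : (∫ θ in (-Real.pi)..Real.pi, q θ) = ∫ θ in (0:ℝ)..(2*Real.pi), q θ := by
      have h2 := hper.intervalIntegral_add_eq (-Real.pi) 0
      rw [zero_add, show -Real.pi + 2 * Real.pi = Real.pi by ring] at h2
      exact h2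
    have e4 : (∮ z in C(0, r), z * φ z)
        = Complex.I * (r:ℂ)^2 * ∫ θ in (0:ℝ)..(2*Real.pi), q θ := by
      rw [circleIntegral]
      simp only [deriv_circleMap, circleMap, Complex.ofReal_zero, zero_add, smul_eq_mul]
      rw [← intervalIntegral.integral_const_mul]
      apply intervalIntegral.integral_congr
      intro θ _
      simp only [q]
      ring
    have hC' : C = Complex.I * (r:ℂ)^2 * ∫ θ in (0:ℝ)..(2*Real.pi), q θ := by
      rw [← hcirc r hr, e4]
    have hrne : (r : ℂ) ≠ 0 := by exact_mod_cast hrpos.ne'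
    rw [← MeasureTheory.integral_Ioc_eq_integral_Ioo,
      ← intervalIntegral.integral_of_le (by linarith : -Real.pi ≤ Real.pi)]
    rw [show (∫ θ in (-Real.pi)..Real.pi, q θ) = ∫ θ in (0:ℝ)..(2*Real.pi), q θ from e3,
      hC']
    field_simp
  -- support bounds for deriv h
  set a : ℝ := min (r₁ + ε₁ / 2) ((r₁ + r₂) / 2) with ha
  set b : ℝ := max (r₂ - ε₂ / 2) ((r₁ + r₂) / 2) with hb
  have har₁ : r₁ < a := by
    apply lt_min <;> [linarith; linarith]
  have hbr₂ : b < r₂ := by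
    apply max_lt <;> [linarith; linarith]
  have hderiv0 : ∀ r : ℝ, r ∉ Icc a b → deriv h r = 0 := by
    intro r hrI
    rw [mem_Icc, not_and_or] at hrI
    rcases hrI with hra | hrb
    · push_neg at hra
      have h1 : r < r₁ + ε₁ / 2 := hra.trans_le (min_le_left _ _)
      exact deriv_zero_of_lt (c := r₁ + ε₁) (by linarith) (fun x hx => hL x hx)
    · push_neg at hrb
      have h1 : r₂ - ε₂ / 2 < r := (le_max_left _ _).trans_lt hrb
      exact deriv_zero_of_gt (c := r₂ - ε₂) (by linarith) (fun x hx => hR x hx)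
  -- the polar integrand
  set F : ℝ × ℝ → ℂ := fun p =>
    (Complex.I / (2 * (r₀:ℂ))) * (p.1:ℂ)^2 * (deriv h p.1 : ℝ) *
      (Complex.exp (p.2 * Complex.I) ^ 2 * φ (p.1 * Complex.exp (p.2 * Complex.I))) with hF
  set T' : Set (ℝ × ℝ) := Ioo r₁ r₂ ×ˢ Ioo (-Real.pi) Real.pi with hT'
  have hT'meas : MeasurableSet T' := measurableSet_Ioo.prod measurableSet_Ioo
  have hsymm : ∀ p : ℝ × ℝ, Complex.polarCoord.symm p
      = (p.1 : ℂ) * Complex.exp (p.2 * Complex.I) := by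
    intro p
    rw [Complex.polarCoord_symm_apply, Complex.exp_mul_I]
    push_cast
    ring
  -- integrability
  have hInt : IntegrableOn F T' volume := by
    set K : Set (ℝ × ℝ) := Icc a b ×ˢ Icc (-Real.pi) Real.pi with hK
    have hKmeas : MeasurableSet K := measurableSet_Icc.prod measurableSet_Icc
    have hKcomp : IsCompact K := isCompact_Icc.prod isCompact_Icc
    have hFK : ContinuousOn F K := by
      have hmap : MapsTo (fun p : ℝ × ℝ => (p.1 : ℂ) * Complex.exp (p.2 * Complex.I)) K W := by
        intro p hp
        rw [hW]
        have hp1 : p.1 ∈ Icc a b := hp.1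
        have habs : ‖(p.1 : ℂ) * Complex.exp (p.2 * Complex.I)‖ = p.1 := by
          rw [norm_mul, Complex.norm_exp_ofReal_mul_I, mul_one, Complex.norm_real, Real.norm_eq_abs,
            abs_of_pos (by linarith [hp1.1] : (0:ℝ) < p.1)]
        constructor <;> rw [habs]
        · linarith [hp1.1]
        · linarith [hp1.2]
      have hexp : Continuous (fun p : ℝ × ℝ => Complex.exp (p.2 * Complex.I)) :=
        Complex.continuous_exp.comp
          ((Complex.continuous_ofReal.comp continuous_snd).mul continuous_const)
      have hm : Continuous (fun p : ℝ × ℝ => (p.1 : ℂ) * Complex.exp (p.2 * Complex.I)) :=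
        (Complex.continuous_ofReal.comp continuous_fst).mul hexp
      have hφK : ContinuousOn
          (fun p : ℝ × ℝ => φ ((p.1 : ℂ) * Complex.exp (p.2 * Complex.I))) K :=
        hφ.continuousOn.comp hm.continuousOn hmap
      have hd : Continuous (deriv h) := hsm.continuous_deriv (by simp)
      exact ((continuousOn_const.mul
        ((Complex.continuous_ofReal.comp continuous_fst).continuousOn.pow 2)).mul
        (Complex.continuous_ofReal.comp (hd.comp continuous_fst)).continuousOn).mul
        (((hexp.pow 2).continuousOn).mul hφK)
    have hEq : EqOn F (K.indicator F) T' := by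
      intro p hp
      by_cases hpK : p ∈ K
      · rw [indicator_of_mem hpK]
      · rw [indicator_of_notMem hpK]
        have hp1 : p.1 ∉ Icc a b := by
          intro hmem
          exact hpK ⟨hmem, ⟨hp.2.1.le, hp.2.2.le⟩⟩
        simp [hF, hderiv0 p.1 hp1]
    rw [integrableOn_congr_fun hEq hT'meas]
    exact ((hFK.integrableOn_compact hKcomp).integrable_indicator hKmeas).integrableOn
  -- main computation
  have hsubT : T' ⊆ polarCoord.target := by
    rw [polarCoord_target, hT']
    exact prod_mono (fun x hx => lt_trans hr₁ hx.1) (subset_refl _)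
  have step1 : (∫ z in W, g z ∂volume) = ∫ p in T', F p ∂volume := by
    rw [← MeasureTheory.integral_indicator hWmeas,
      ← Complex.integral_comp_polarCoord_symm (W.indicator g)]
    have heq : EqOn (fun p : ℝ × ℝ => p.1 • W.indicator g (Complex.polarCoord.symm p))
        (T'.indicator F) polarCoord.target := by
      intro p hp
      rw [polarCoord_target] at hp
      have hp1 : 0 < p.1 := hp.1
      have hp2 : p.2 ∈ Ioo (-Real.pi) Real.pi := hp.2
      have habs : ‖Complex.polarCoord.symm p‖ = p.1 := by
        rw [Complex.norm_polarCoord_symm, abs_of_pos hp1]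
      by_cases hmem : p.1 ∈ Ioo r₁ r₂
      · have hzW : Complex.polarCoord.symm p ∈ W := by
          rw [hW]
          exact ⟨by rw [habs]; exact hmem.1, by rw [habs]; exact hmem.2⟩
        have hpT' : p ∈ T' := ⟨hmem, hp2⟩
        simp only [indicator_of_mem hzW, indicator_of_mem hpT']
        rw [hg]
        simp only
        rw [habs, hsymm p, hF]
        have hp1C : (p.1 : ℂ) ≠ 0 := by exact_mod_cast hp1.ne'
        rw [Complex.real_smul]
        field_simp
      · have hzW : Complex.polarCoord.symm p ∉ W := by
          rw [hW]
          intro hmem'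
          rw [mem_setOf_eq, habs] at hmem'
          exact hmem ⟨hmem'.1, hmem'.2⟩
        have hpT' : p ∉ T' := fun hpt => hmem hpt.1
        simp only [indicator_of_notMem hzW, indicator_of_notMem hpT', smul_zero]
    rw [MeasureTheory.setIntegral_congr_fun polarCoord.open_target.measurableSet heq,
      MeasureTheory.setIntegral_indicator hT'meas,
      inter_eq_self_of_subset_right hsubT]
  have step2 : (∫ p in T', F p ∂volume)
      = ∫ r in Ioo r₁ r₂, ((deriv h r : ℝ) : ℂ) * (C / (2 * r₀)) ∂volume := by
    rw [hT', Measure.volume_eq_prod]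
    rw [MeasureTheory.setIntegral_prod F (by rw [← Measure.volume_eq_prod]; exact hInt)]
    apply MeasureTheory.setIntegral_congr_fun measurableSet_Ioo
    intro r hr
    simp only [hF]
    rw [MeasureTheory.integral_const_mul, key_inner r hr]
    have hrne : (r : ℂ) ≠ 0 := by
      exact_mod_cast (hr₁.trans hr.1).ne'
    field_simp
  have step3 : (∫ r in Ioo r₁ r₂, ((deriv h r : ℝ) : ℂ) * (C / (2 * r₀)) ∂volume)
      = C / (2 * r₀) := by
    rw [MeasureTheory.integral_mul_const]
    have : (∫ r in Ioo r₁ r₂, ((deriv h r : ℝ) : ℂ) ∂volume)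
        = ((∫ r in Ioo r₁ r₂, deriv h r ∂volume : ℝ) : ℂ) := integral_ofReal
    rw [this]
    have hreal : (∫ r in Ioo r₁ r₂, deriv h r ∂volume) = 1 := by
      rw [← MeasureTheory.integral_Ioc_eq_integral_Ioo,
        ← intervalIntegral.integral_of_le (by linarith : r₁ ≤ r₂)]
      rw [intervalIntegral.integral_deriv_eq_sub
        (fun x _ => (hsm.differentiable (by simp)).differentiableAt)
        ((hsm.continuous_deriv (by simp)).intervalIntegrable _ _)]
      rw [hR r₂ (by linarith), hL r₁ (by linarith)]
      norm_num
    rw [hreal]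
    norm_num
  rw [step1, step2, step3]

/-- The pairing `∫_W μ_h φ dA` (with `dA = i dz ∧ dz̄ = 2 ×` Lebesgue measure), where
`μ_h(z) = (i/2) z² h'(|z|)/(|z| r₀)`, is independent of the choice of admissible `h`. -/
theorem twist_pairing_independent_of_h (r₀ r₁ r₂ : ℝ) (hr₁ : 0 < r₁) (hr₁₀ : r₁ < r₀)
    (hr₀₂ : r₀ < r₂)
    (W : Set ℂ) (hW : W = {z : ℂ | r₁ < ‖z‖ ∧ ‖z‖ < r₂})
    (φ : ℂ → ℂ) (hφ : DifferentiableOn ℂ φ W)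
    (h₁ h₂ : ℝ → ℝ) (hh₁ : Admissible r₁ r₂ h₁) (hh₂ : Admissible r₁ r₂ h₂)
    (μ : (ℝ → ℝ) → ℂ → ℂ)
    (hμ : ∀ h z, μ h z =
      (Complex.I / 2) * z ^ 2 * (deriv h (‖z‖)) / ((‖z‖ : ℂ) * r₀)) :
    (2 : ℂ) * ∫ z in W, μ h₁ z * φ z ∂volume =
    (2 : ℂ) * ∫ z in W, μ h₂ z * φ z ∂volume := by
  have hWmeas : MeasurableSet W := by
    rw [hW]
    exact (isOpen_Ioo.preimage continuous_norm).measurableSet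
  have key : ∀ h : ℝ → ℝ, Admissible r₁ r₂ h →
      (∫ z in W, μ h z * φ z ∂volume) = (∮ z in C(0, r₀), z * φ z) / (2 * r₀) := by
    intro h hh
    have heq : EqOn (fun z => μ h z * φ z)
        (fun z => (Complex.I / 2) * z ^ 2 * (deriv h (‖z‖)) /
          ((‖z‖ : ℂ) * r₀) * φ z) W := by
      intro z _
      simp only [hμ]
    rw [MeasureTheory.setIntegral_congr_fun hWmeas heq]
    exact pairing_eq r₀ r₁ r₂ hr₁ hr₁₀ hr₀₂ W hW φ hφ h hh
  rw [key h₁ hh₁, key h₂ hh₂]
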